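/- arXiv:1409.0941 — 2 statements merged into one kernel-verified Lean document; each statement's English description precedes it below -/
import Mathlib

section
/- Define the set P of pole pairs as the smallest set of pairs of integers containing (6,4) and closed under the operations (c,d) ↦ (c, c+d−2) and (c,d) ↦ (c+d−2, d). Then for every (a,b) ∈ P: (i) it is not the case that a ≤ 2 and b ≥ 2; (ii) it is not the case that a ≥ 2 and b ≤ −2; (iii) it is not the case that a ≥ 4 and b ≤ 0; (iv) it is not the case that a = b ≤ −2. -/
/-- The inductively defined set of pole pairs: contains `(6,4)` and is closed under
`(c,d) ↦ (c, c+d-2)` and `(c,d) ↦ (c+d-2, d)`. -/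
inductive PolePair : ℤ → ℤ → Prop
  | base : PolePair 6 4
  | left {c d : ℤ} : PolePair c d → PolePair c (c + d - 2)
  | right {c d : ℤ} : PolePair c d → PolePair (c + d - 2) d

lemma polePair_ge (a b : ℤ) (h : PolePair a b) : 4 ≤ a ∧ 4 ≤ b := by
  induction h with
  | base => omega
  | left _ ih => omega
  | right _ ih => omega

/-- No pole pair `(a,b)` satisfies: (i) `a ≤ 2` and `b ≥ 2`; (ii) `a ≥ 2` and `b ≤ -2`;
(iii) `a ≥ 4` and `b ≤ 0`; (iv) `a = b ≤ -2`. -/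
theorem polePair_excluded (a b : ℤ) (h : PolePair a b) :
    ¬(a ≤ 2 ∧ 2 ≤ b) ∧ ¬(2 ≤ a ∧ b ≤ -2) ∧ ¬(4 ≤ a ∧ b ≤ 0) ∧ ¬(a = b ∧ a ≤ -2) := by
  have := polePair_ge a b h
  omega
end

section
/- Let m ≥ 1 and let F(x,y) = (yᵐ·g(x,y), f(x,y)) be holomorphic near the origin of ℂ² with g(0,0) ≠ 0, f(0,0) = 0, and suppose the complex Jacobian determinant of F is of the form y^{m−1}·u(x,y) with u(0,0) ≠ 0. Then there exist a neighborhood of the origin and a biholomorphism H of that neighborhood onto its image, with H(0,0) = (0,0), such that F = S_m ∘ H where S_m(x,y) = (xᵐ, y). -/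
/-!
Writing `g = hᵐ` for an analytic `m`-th root `h` of `g` (possible since `g(0,0) ≠ 0`), we have
`F = S_m ∘ H` with `H(x,y) = (y h, f)`. The derivative of `H` at the origin is
`(v₁, v₂) ↦ (h(0,0) v₂, ∂ₓf(0,0) v₁ + ∂_yf(0,0) v₂)`, so `H` is a local biholomorphism as soon as
`∂ₓf(0,0) ≠ 0`. On the axis `x = 0` the Jacobian identity reads
`y^{m-1} (y (g_x f_y - g_y f_x) - m g f_x) = y^{m-1} u`; cancelling `y^{m-1}` for `y ≠ 0` and
letting `y → 0` gives `-m g(0,0) ∂ₓf(0,0) = u(0,0) ≠ 0`.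
-/

open Filter Topology Set

section Slices

variable {𝕜 : Type*} [NontriviallyNormedField 𝕜] {F : Type*} [NormedAddCommGroup F]
  [NormedSpace 𝕜 F] {φ : 𝕜 × 𝕜 → F} {x y : 𝕜}

theorem DifferentiableAt.hasDerivAt_comp_prodMk_left (hφ : DifferentiableAt 𝕜 φ (x, y)) :
    HasDerivAt (fun s => φ (s, y)) (fderiv 𝕜 φ (x, y) (1, 0)) x :=
  hφ.hasFDerivAt.comp_hasDerivAt x ((hasDerivAt_id x).prodMk (hasDerivAt_const x y))

theorem DifferentiableAt.hasDerivAt_comp_prodMk_right (hφ : DifferentiableAt 𝕜 φ (x, y)) :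
    HasDerivAt (fun s => φ (x, s)) (fderiv 𝕜 φ (x, y) (0, 1)) y :=
  hφ.hasFDerivAt.comp_hasDerivAt y ((hasDerivAt_const y x).prodMk (hasDerivAt_id y))

end Slices

theorem ContinuousLinearMap.exists_continuousLinearEquiv_of_injective {𝕜 : Type*}
    [NontriviallyNormedField 𝕜] [CompleteSpace 𝕜] {E : Type*} [NormedAddCommGroup E]
    [NormedSpace 𝕜 E] [FiniteDimensional 𝕜 E] {T : E →L[𝕜] E} (hT : Function.Injective T) :
    ∃ e : E ≃L[𝕜] E, (e : E →L[𝕜] E) = T :=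
  ⟨(LinearEquiv.ofInjectiveEndo (T : E →ₗ[𝕜] E) hT).toContinuousLinearEquiv, rfl⟩

theorem eq_of_pow_mul_eventuallyEq {𝕜 : Type*} [NontriviallyNormedField 𝕜] {a b : 𝕜 → 𝕜}
    (ha : ContinuousAt a 0) (hb : ContinuousAt b 0) {k : ℕ}
    (h : ∀ᶠ y in 𝓝 0, y ^ k * a y = y ^ k * b y) : a 0 = b 0 := by
  have hne : a =ᶠ[𝓝[≠] 0] b := by
    filter_upwards [eventually_nhdsWithin_of_eventually_nhds h, self_mem_nhdsWithin]
      with y hy hy0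
    exact mul_left_cancel₀ (pow_ne_zero k hy0) hy
  exact ((ha.eventuallyEq_nhds_iff_eventuallyEq_nhdsNE hb).1 hne).eq_of_nhds

theorem AnalyticAt.exists_pow_eq {E : Type*} [NormedAddCommGroup E] [NormedSpace ℂ E]
    {g : E → ℂ} {x : E} (hg : AnalyticAt ℂ g x) (hx : g x ≠ 0) {n : ℕ} (hn : n ≠ 0) :
    ∃ h : E → ℂ, AnalyticAt ℂ h x ∧ ∀ᶠ y in 𝓝 x, h y ^ n = g y := by
  obtain ⟨c, hc⟩ := IsAlgClosed.exists_pow_nat_eq (g x) (Nat.pos_of_ne_zero hn)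
  refine ⟨fun y => c * Complex.exp (Complex.log (g y / g x) / n), ?_, ?_⟩
  · have hslit : g x / g x ∈ Complex.slitPlane := by
      rw [div_self hx]; exact Complex.one_mem_slitPlane
    have hlog : AnalyticAt ℂ (fun y => Complex.log (g y / g x)) x :=
      (analyticAt_clog hslit).comp (f := fun y => g y / g x) (hg.div analyticAt_const hx)
    fun_prop
  · filter_upwards [hg.continuousAt.eventually_ne hx] with y hy
    rw [mul_pow, ← Complex.exp_nat_mul, mul_div_cancel₀ _ (Nat.cast_ne_zero.2 hn),
      Complex.exp_log (div_ne_zero hy hx), hc, mul_div_cancel₀ _ hx]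

section LocalInverse

variable {𝕜 : Type*} [NontriviallyNormedField 𝕜]
  {E F : Type*} [NormedAddCommGroup E] [NormedSpace 𝕜 E] [CompleteSpace E]
  [NormedAddCommGroup F] [NormedSpace 𝕜 F] [CompleteSpace F]

theorem AnalyticAt.exists_analyticOnNhd_leftInverse {f : E → F} {x : E}
    (hf : AnalyticAt 𝕜 f x) {f' : E ≃L[𝕜] F} (hf' : fderiv 𝕜 f x = f') {s : Set E}
    (hs : s ∈ 𝓝 x) :
    ∃ V ∈ 𝓝 x, V ⊆ s ∧ ∃ g : F → E, AnalyticOnNhd 𝕜 f V ∧ InjOn f V ∧ IsOpen (f '' V) ∧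
      AnalyticOnNhd 𝕜 g (f '' V) ∧ ∀ p ∈ V, g (f p) = p := by
  have hstrict : HasStrictFDerivAt f (f' : E →L[𝕜] F) x := hf' ▸ hf.hasStrictFDerivAt
  set φ := hstrict.toOpenPartialHomeomorph f
  have hφ : ⇑φ = f := hstrict.toOpenPartialHomeomorph_coe
  have hgood : ∀ᶠ p in 𝓝 x, AnalyticAt 𝕜 f p ∧
      fderiv 𝕜 f p ∈ range ((↑) : (E ≃L[𝕜] F) → E →L[𝕜] F) :=
    hf.eventually_analyticAt.and <| hf.fderiv.continuousAt.preimage_mem_nhds <|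
      ContinuousLinearEquiv.isOpen.mem_nhds ⟨f', hf'.symm⟩
  -- Openness of `V` makes `f '' V` open; invertibility of `fderiv 𝕜 f` on `V` makes `φ.symm`
  -- analytic there.
  set V := interior (φ.source ∩ s ∩ {p | AnalyticAt 𝕜 f p ∧
      fderiv 𝕜 f p ∈ range ((↑) : (E ≃L[𝕜] F) → E →L[𝕜] F)})
  have hVsource : V ⊆ φ.source :=
    interior_subset.trans <| inter_subset_left.trans inter_subset_left
  refine ⟨V, interior_mem_nhds.2 ?_,
    interior_subset.trans <| inter_subset_left.trans inter_subset_right,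
    φ.symm, fun p hp => (interior_subset hp).2.1, hφ ▸ φ.injOn.mono hVsource,
    hφ ▸ φ.isOpen_image_of_subset_source isOpen_interior hVsource, ?_,
    fun p hp => hφ ▸ φ.left_inv (hVsource hp)⟩
  · exact inter_mem (inter_mem
      (φ.open_source.mem_nhds hstrict.mem_toOpenPartialHomeomorph_source) hs) hgood
  · rintro _ ⟨p, hp, rfl⟩
    obtain ⟨-, hpf, e, he⟩ := interior_subset hp
    rw [← hφ] at hpf he ⊢
    exact φ.analyticAt_symm' (hVsource hp) hpf he.symm

end LocalInverse

theorem injective_fderiv_snd_mul_prodMk {𝕜 : Type*} [NontriviallyNormedField 𝕜]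
    {h f : 𝕜 × 𝕜 → 𝕜} {x : 𝕜} (hh : DifferentiableAt 𝕜 h (x, 0))
    (hf : DifferentiableAt 𝕜 f (x, 0)) (hh0 : h (x, 0) ≠ 0) (hfx : fderiv 𝕜 f (x, 0) (1, 0) ≠ 0) :
    Function.Injective (fderiv 𝕜 (fun p => (p.2 * h p, f p)) (x, 0)) := by
  have hD : HasFDerivAt (fun p => (p.2 * h p, f p))
      ((h (x, 0) • ContinuousLinearMap.snd 𝕜 𝕜 𝕜).prod (fderiv 𝕜 f (x, 0))) (x, 0) := by
    refine ((hasFDerivAt_snd.mul hh.hasFDerivAt).congr_fderiv ?_).prodMk hf.hasFDerivAt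
    ext <;> simp
  rw [hD.fderiv, injective_iff_map_eq_zero]
  rintro ⟨v₁, v₂⟩ hv
  have hv₂ : v₂ = 0 := by simpa [hh0] using congrArg Prod.fst hv
  subst hv₂
  have hv₁ : v₁ • fderiv 𝕜 f (x, 0) (1, 0) = 0 := by
    rw [← map_smul]
    simpa using congrArg Prod.snd hv
  simpa using (smul_eq_zero.1 hv₁).resolve_right hfx

theorem fderiv_apply_one_zero_ne_zero_of_jacobian {m : ℕ} (hm : 1 ≤ m) {g f u : ℂ × ℂ → ℂ}
    (hg : AnalyticAt ℂ g (0, 0)) (hf : AnalyticAt ℂ f (0, 0)) (hu : ContinuousAt u (0, 0))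
    (hu0 : u (0, 0) ≠ 0)
    (hjac : ∀ᶠ p in 𝓝 ((0, 0) : ℂ × ℂ),
      deriv (fun s => p.2 ^ m * g (s, p.2)) p.1 * deriv (fun s => f (p.1, s)) p.2 -
        deriv (fun s => s ^ m * g (p.1, s)) p.2 * deriv (fun s => f (s, p.2)) p.1 =
      p.2 ^ (m - 1) * u p) :
    fderiv ℂ f (0, 0) (1, 0) ≠ 0 := by
  set a : ℂ → ℂ := fun y => y * fderiv ℂ g (0, y) (1, 0) * fderiv ℂ f (0, y) (0, 1) -
      (m * g (0, y) + y * fderiv ℂ g (0, y) (0, 1)) * fderiv ℂ f (0, y) (1, 0)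
  have hslice : Continuous fun y : ℂ => ((0 : ℂ), y) := by fun_prop
  have ha : ContinuousAt a 0 := by
    have := hg.fderiv.continuousAt
    have := hf.fderiv.continuousAt
    have := hg.continuousAt
    fun_prop
  have hb : ContinuousAt (fun y => u (0, y)) 0 := by
    fun_prop
  have hev : ∀ᶠ y in 𝓝 (0 : ℂ), y ^ (m - 1) * a y = y ^ (m - 1) * u (0, y) := by
    filter_upwards [hslice.continuousAt.eventually
      (hjac.and (hg.eventually_analyticAt.and hf.eventually_analyticAt))]
      with y ⟨hj, hgy, hfy⟩
    rw [((hgy.differentiableAt.hasDerivAt_comp_prodMk_left).const_mul _).deriv,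
      (hfy.differentiableAt.hasDerivAt_comp_prodMk_right).deriv,
      ((hasDerivAt_pow m y).fun_mul hgy.differentiableAt.hasDerivAt_comp_prodMk_right).deriv,
      (hfy.differentiableAt.hasDerivAt_comp_prodMk_left).deriv] at hj
    obtain ⟨k, rfl⟩ := Nat.exists_eq_add_of_le' hm
    simp only [a, add_tsub_cancel_right] at hj ⊢
    linear_combination hj
  have hlim : -(m * g (0, 0) * fderiv ℂ f (0, 0) (1, 0)) = u (0, 0) := by
    simpa [a] using eq_of_pow_mul_eventuallyEq ha hb hev
  exact fun hfx => hu0 (by simpa [hfx] using hlim.symm)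

/-- Local model of the resolved Jacobian map: if `F(x,y) = (yᵐ g, f)` with
`g(0,0) ≠ 0`, `f(0,0) = 0` and Jacobian determinant `y^{m-1} u` with `u(0,0) ≠ 0`,
then `F = S_m ∘ H` near the origin, where `S_m(x,y) = (xᵐ, y)` and `H` is a
biholomorphism onto its image fixing the origin. -/
theorem local_model_Sm (m : ℕ) (hm : 1 ≤ m) (g f u : ℂ × ℂ → ℂ) (U : Set (ℂ × ℂ))
    (hUopen : IsOpen U) (hU0 : (0, 0) ∈ U)
    (hg : AnalyticOnNhd ℂ g U) (hf : AnalyticOnNhd ℂ f U) (hu : AnalyticOnNhd ℂ u U)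
    (hg0 : g (0, 0) ≠ 0) (hf0 : f (0, 0) = 0) (hu0 : u (0, 0) ≠ 0)
    (hjac : ∀ p ∈ U,
      deriv (fun s => p.2 ^ m * g (s, p.2)) p.1 * deriv (fun s => f (p.1, s)) p.2 -
        deriv (fun s => s ^ m * g (p.1, s)) p.2 * deriv (fun s => f (s, p.2)) p.1 =
      p.2 ^ (m - 1) * u p) :
    ∃ V ∈ nhds ((0, 0) : ℂ × ℂ), ∃ H Hinv : ℂ × ℂ → ℂ × ℂ,
      AnalyticOnNhd ℂ H V ∧ H (0, 0) = (0, 0) ∧ Set.InjOn H V ∧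
      IsOpen (H '' V) ∧ AnalyticOnNhd ℂ Hinv (H '' V) ∧
      (∀ p ∈ V, Hinv (H p) = p) ∧
      (∀ p ∈ V, (p.2 ^ m * g p, f p) = ((H p).1 ^ m, (H p).2)) := by
  have hfx : fderiv ℂ f (0, 0) (1, 0) ≠ 0 :=
    fderiv_apply_one_zero_ne_zero_of_jacobian hm (hg _ hU0) (hf _ hU0) (hu _ hU0).continuousAt hu0
      (eventually_of_mem (hUopen.mem_nhds hU0) hjac)
  obtain ⟨h, hh, hhg⟩ := (hg _ hU0).exists_pow_eq hg0 (by omega : m ≠ 0)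
  have hh0 : h (0, 0) ≠ 0 := fun h0 => hg0 <| by
    rw [← hhg.self_of_nhds, h0, zero_pow (by omega)]
  set H : ℂ × ℂ → ℂ × ℂ := fun p => (p.2 * h p, f p)
  have hH : AnalyticAt ℂ H (0, 0) := (analyticAt_snd.mul hh).prod (hf _ hU0)
  obtain ⟨E, hE⟩ := ContinuousLinearMap.exists_continuousLinearEquiv_of_injective <|
    injective_fderiv_snd_mul_prodMk hh.differentiableAt (hf _ hU0).differentiableAt hh0 hfx
  obtain ⟨V, hV, hVg, Hinv, hHV, hinj, hopen, hinv, hleft⟩ :=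
    hH.exists_analyticOnNhd_leftInverse hE.symm hhg
  refine ⟨V, hV, H, Hinv, hHV, by simp [H, hf0], hinj, hopen, hinv, hleft, fun p hp => ?_⟩
  have hgp : h p ^ m = g p := hVg hp
  simp only [H, mul_pow, hgp]
end
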